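/- Jacobi's formula along a fluid flow: for all (t,l) ∈ ℝ × ℝⁿ, the Jacobian determinant of the flow map satisfies ∂_t det(D_l g(t,l)) = (div u)(t, g(t,l)) · det(D_l g(t,l)), where div u = Σⱼ ∂_{xⱼ} uⱼ. -/

import Mathlib

/-!
The map `g` is `C²`, since both of its partial derivatives, `∂ₜg = u(t, g)` and `D_l g`, are `C¹`.
Hence the mixed partials commute, and the spatial derivative `A(t) = D_l g(t, l)` satisfies
`A' = D_l (∂ₜg) = D_l (u(t, g(t, ·))) = M ∘ A` with `M = D_x u(t, g(t, l))`.

Jacobi's formula for a curve with `A' = M A` then gives `(det A)' = tr M · det A`: differentiating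
the determinant row by row gives `∑ᵢ det (A with row i replaced by (M A)ᵢ)`, and since
`(M A)ᵢ = ∑ₖ Mᵢₖ Aₖ`, only the term `Mᵢᵢ det A` survives in the `i`-th summand. Finally
`tr M = (div u)(t, g(t, l))`.
-/

open ContinuousLinearMap

section Determinant

variable {𝕜 : Type*} [NontriviallyNormedField 𝕜] {ι : Type*} [Fintype ι] [DecidableEq ι]

theorem Matrix.sum_det_updateRow_mul {R : Type*} [CommRing R] (N A : Matrix ι ι R) :
    ∑ i, (A.updateRow i ((N * A) i)).det = N.trace * A.det := by
  simp_rw [Matrix.trace, Finset.sum_mul]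
  refine Finset.sum_congr rfl fun i _ => ?_
  have hrow : (N * A) i = ∑ k, N i k • A k := by
    ext j
    simp [Matrix.mul_apply, Finset.sum_apply]
  rw [hrow, Matrix.det_updateRow_sum, Matrix.diag_apply, smul_eq_mul]

variable (𝕜 ι) in
noncomputable def Matrix.detContinuousMultilinearMap :
    ContinuousMultilinearMap 𝕜 (fun _ : ι => ι → 𝕜) 𝕜 :=
  { (Matrix.detRowAlternating : (ι → 𝕜) [⋀^ι]→ₗ[𝕜] 𝕜).toMultilinearMap with
    cont := continuous_id.matrix_det }

theorem Matrix.hasDerivAt_det {B : 𝕜 → ι → ι → 𝕜} {B' : ι → ι → 𝕜} {t : 𝕜}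
    (h : HasDerivAt B B' t) :
    HasDerivAt (fun s => (Matrix.of (B s)).det)
      (∑ i, ((Matrix.of (B t)).updateRow i (B' i)).det) t := by
  have := ((detContinuousMultilinearMap 𝕜 ι).hasFDerivAt (x := B t)).comp_hasDerivAt t h
  rwa [ContinuousMultilinearMap.linearDeriv_apply] at this

theorem LinearMap.trace_eq_sum_apply_single {R : Type*} [CommRing R] (M : (ι → R) →ₗ[R] ι → R) :
    LinearMap.trace R (ι → R) M = ∑ j, M (Pi.single j 1) j := by
  rw [LinearMap.trace_eq_matrix_trace R (Pi.basisFun R ι), LinearMap.toMatrix_eq_toMatrix']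
  rfl

theorem ContinuousLinearMap.hasDerivAt_det {A : 𝕜 → (ι → 𝕜) →L[𝕜] (ι → 𝕜)}
    {M : (ι → 𝕜) →L[𝕜] (ι → 𝕜)} {t : 𝕜} (h : HasDerivAt A (M ∘L A t) t) :
    HasDerivAt (fun s => (A s).det) (LinearMap.trace 𝕜 (ι → 𝕜) M * (A t).det) t := by
  have hB : HasDerivAt (fun s => LinearMap.toMatrix' (A s : (ι → 𝕜) →ₗ[𝕜] ι → 𝕜))
      (LinearMap.toMatrix' (M ∘L A t : (ι → 𝕜) →ₗ[𝕜] ι → 𝕜)) t := by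
    refine hasDerivAt_pi.2 fun i => hasDerivAt_pi.2 fun j => ?_
    simpa only [LinearMap.toMatrix'_apply, coe_coe, map_zero, add_zero] using
      hasDerivAt_pi.1 (h.clm_apply (hasDerivAt_const t (Pi.single j 1))) i
  convert Matrix.hasDerivAt_det hB using 1
  · exact funext fun s => (LinearMap.det_toMatrix' _).symm
  · have key := Matrix.sum_det_updateRow_mul (LinearMap.toMatrix' (M : (ι → 𝕜) →ₗ[𝕜] ι → 𝕜))
      (LinearMap.toMatrix' (A t : (ι → 𝕜) →ₗ[𝕜] ι → 𝕜))
    rw [← LinearMap.toMatrix'_comp, ← toLinearMap_comp, LinearMap.det_toMatrix',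
      ← Matrix.trace_toLin'_eq, Matrix.toLin'_toMatrix'] at key
    exact key.symm

end Determinant

section PartialDerivatives

variable {𝕜 E F G : Type*} [NontriviallyNormedField 𝕜] [NormedAddCommGroup E] [NormedSpace 𝕜 E]
  [NormedAddCommGroup F] [NormedSpace 𝕜 F] [NormedAddCommGroup G] [NormedSpace 𝕜 G]

theorem deriv_comp_prodMk_left {f : 𝕜 × F → G} {t : 𝕜} {y : F}
    (hf : DifferentiableAt 𝕜 f (t, y)) :
    deriv (fun s => f (s, y)) t = fderiv 𝕜 f (t, y) (1, 0) :=
  (hf.hasFDerivAt.comp_hasDerivAt t (hasFDerivAt_prodMk_left t y).hasDerivAt).deriv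

theorem fderiv_comp_prodMk_right {f : E × F → G} {x : E} {y : F}
    (hf : DifferentiableAt 𝕜 f (x, y)) :
    fderiv 𝕜 (fun y' => f (x, y')) y = fderiv 𝕜 f (x, y) ∘L inr 𝕜 E F :=
  (hf.hasFDerivAt.comp y (hasFDerivAt_prodMk_right x y)).fderiv

theorem fderiv_eq_smulRight_deriv_add_fderiv_comp_snd {f : 𝕜 × F → G} {p : 𝕜 × F}
    (hf : DifferentiableAt 𝕜 f p) :
    fderiv 𝕜 f p = (fst 𝕜 𝕜 F).smulRight (deriv (fun s => f (s, p.2)) p.1)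
      + fderiv 𝕜 (fun y => f (p.1, y)) p.2 ∘L snd 𝕜 𝕜 F := by
  obtain ⟨t, y⟩ := p
  refine ContinuousLinearMap.ext fun v => ?_
  rw [deriv_comp_prodMk_left hf, fderiv_comp_prodMk_right hf]
  conv_lhs => rw [show v = v.1 • ((1 : 𝕜), (0 : F)) + ((0 : 𝕜), v.2) by simp]
  rw [map_add, map_smul]
  rfl

theorem contDiff_succ_of_partials {f : 𝕜 × F → G} {n : ℕ} (hf : Differentiable 𝕜 f)
    (h₁ : ContDiff 𝕜 n fun p : 𝕜 × F => deriv (fun s => f (s, p.2)) p.1)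
    (h₂ : ContDiff 𝕜 n fun p : 𝕜 × F => fderiv 𝕜 (fun y => f (p.1, y)) p.2) :
    ContDiff 𝕜 (n + 1) f := by
  refine contDiff_succ_iff_fderiv.2 ⟨hf, by simp, ?_⟩
  have hfderiv : fderiv 𝕜 f = fun p => (fst 𝕜 𝕜 F).smulRight (deriv (fun s => f (s, p.2)) p.1)
      + fderiv 𝕜 (fun y => f (p.1, y)) p.2 ∘L snd 𝕜 𝕜 F :=
    funext fun p => fderiv_eq_smulRight_deriv_add_fderiv_comp_snd (hf p)
  rw [hfderiv]
  exact (contDiff_const.smulRight h₁).add (h₂.clm_comp contDiff_const)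

theorem ContDiff.hasDerivAt_fderiv_comp_prodMk_right [IsRCLikeNormedField 𝕜] {f : 𝕜 × F → G}
    (hf : ContDiff 𝕜 2 f) (t : 𝕜) (y : F) :
    HasDerivAt (fun s => fderiv 𝕜 (fun y' => f (s, y')) y)
      (fderiv 𝕜 (fun y' => deriv (fun s => f (s, y')) t) y) t := by
  have hdiff : Differentiable 𝕜 f := hf.differentiable (by norm_num)
  have hD : Differentiable 𝕜 (fderiv 𝕜 f) :=
    (hf.fderiv_right (m := (1 : WithTop ℕ∞)) (by norm_num)).differentiable (by norm_num)
  have hsymm : IsSymmSndFDerivAt 𝕜 f (t, y) := hf.contDiffAt.isSymmSndFDerivAt (by simp)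
  have hleft : HasDerivAt (fun s => fderiv 𝕜 (fun y' => f (s, y')) y)
      (fderiv 𝕜 (fderiv 𝕜 f) (t, y) (1, 0) ∘L inr 𝕜 𝕜 F) t := by
    simp_rw [fderiv_comp_prodMk_right (hdiff _)]
    simpa using ((hD _).hasFDerivAt.comp_hasDerivAt t
      (hasFDerivAt_prodMk_left (𝕜 := 𝕜) t y).hasDerivAt).clm_comp (hasDerivAt_const t (inr 𝕜 𝕜 F))
  have hright : HasFDerivAt (fun y' => deriv (fun s => f (s, y')) t)
      (apply 𝕜 G ((1 : 𝕜), (0 : F)) ∘L fderiv 𝕜 (fderiv 𝕜 f) (t, y) ∘L inr 𝕜 𝕜 F) y := by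
    simp_rw [deriv_comp_prodMk_left (hdiff _)]
    exact (apply 𝕜 G ((1 : 𝕜), (0 : F))).hasFDerivAt.comp y
      ((hD _).hasFDerivAt.comp y (hasFDerivAt_prodMk_right t y))
  convert hleft using 1
  ext1 w
  simp [hright.fderiv, hsymm.eq]

end PartialDerivatives

/-- **Jacobi's formula along a fluid flow.**
If `g : ℝ × ℝⁿ → ℝⁿ` is continuously differentiable jointly in `(t, l)`, its spatial
differential `D_l g (t, l)` is continuously differentiable in `(t, l)`, `u` is a
continuously differentiable time-dependent velocity field, and `g` is a flow map of `u`
(i.e. `∂_t g (t, l) = u (t, g (t, l))`), then the Jacobian determinant of the flow map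
satisfies `∂_t det (D_l g (t, l)) = (div u) (t, g (t, l)) * det (D_l g (t, l))`,
where `div u = Σ_j ∂_{x_j} u_j`. -/
theorem jacobi_formula_along_flow
    (n : ℕ)
    (g : ℝ × (Fin n → ℝ) → (Fin n → ℝ))
    (u : ℝ × (Fin n → ℝ) → (Fin n → ℝ))
    (hg : ContDiff ℝ 1 g)
    (hDg : ContDiff ℝ 1 (fun p : ℝ × (Fin n → ℝ) =>
      fderiv ℝ (fun l => g (p.1, l)) p.2))
    (hu : ContDiff ℝ 1 u)
    (hflow : ∀ t l, deriv (fun s => g (s, l)) t = u (t, g (t, l))) :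
    ∀ (t : ℝ) (l : Fin n → ℝ),
      deriv (fun s => (fderiv ℝ (fun l' => g (s, l')) l).det) t
        = (∑ j, fderiv ℝ (fun x => u (t, x) j) (g (t, l)) (Pi.single j 1))
            * (fderiv ℝ (fun l' => g (t, l')) l).det := by
  intro t l
  have hg₂ : ContDiff ℝ 2 g := by
    have hdt : ContDiff ℝ 1 fun p : ℝ × (Fin n → ℝ) => deriv (fun s => g (s, p.2)) p.1 := by
      convert hu.comp (contDiff_fst.prodMk hg) using 1
      exact funext fun p => hflow p.1 p.2
    exact contDiff_succ_of_partials (n := 1) (hg.differentiable one_ne_zero) hdt hDg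
  have hux : DifferentiableAt ℝ (fun x => u (t, x)) (g (t, l)) :=
    (hu.differentiable one_ne_zero _).comp _ (by fun_prop)
  have hgl : DifferentiableAt ℝ (fun l' => g (t, l')) l :=
    (hg.differentiable one_ne_zero _).comp _ (by fun_prop)
  have hA : HasDerivAt (fun s => fderiv ℝ (fun l' => g (s, l')) l)
      (fderiv ℝ (fun x => u (t, x)) (g (t, l)) ∘L fderiv ℝ (fun l' => g (t, l')) l) t := by
    refine (hg₂.hasDerivAt_fderiv_comp_prodMk_right t l).congr_deriv ?_
    simp_rw [hflow]
    exact (hux.hasFDerivAt.comp l hgl.hasFDerivAt).fderiv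
  rw [(ContinuousLinearMap.hasDerivAt_det hA).deriv, LinearMap.trace_eq_sum_apply_single]
  simp [fderiv_apply hux]
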